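/- For nonnegative integers i, j and 1 ≤ a ≤ b, ∫ₐᵇ t^{-2} N_i(t) N_j(t) dt ≤ ∫ₐᵇ t^{-2} h₀(t) N_{i+j}(t) dt. -/

import Mathlib

/-!
For fixed `t ≥ 1` the integrand inequality `N_i(t) N_j(t) ≤ h₀(t) N_{i+j}(t)` is Chebyshev's
integral inequality for the weight `s^{-γ}` on `(1, t]` and the similarly ordered functions `h^i`
and `h^j`. That inequality follows by integrating the rearrangement inequality
`f x g y + f y g x ≤ f x g x + f y g y`, weighted by `w x w y`, over the product measure.
-/

open MeasureTheory Real

noncomputable def h0 (γ t : ℝ) : ℝ := ∫ s in (1:ℝ)..t, s ^ (-γ)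

noncomputable def hfun (γ t : ℝ) : ℝ := ∫ s in Set.Ioi (1:ℝ), s ^ (-γ) * (max t s)⁻¹

noncomputable def Nfun (γ : ℝ) (m : ℕ) (t : ℝ) : ℝ := ∫ s in (1:ℝ)..t, s ^ (-γ) * (hfun γ s) ^ m

noncomputable def Qfun (γ : ℝ) (m : ℕ) (t : ℝ) : ℝ :=
  ∫ s in Set.Ioi (1:ℝ), s ^ (-γ) * (max t s)⁻¹ * (hfun γ s) ^ m

noncomputable def Pfun (γ : ℝ) (m : ℕ) (t : ℝ) : ℝ :=
  ∫ s in Set.Ioi (1:ℝ), s ^ (-γ) * hfun γ (max t s) * (hfun γ s) ^ m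

noncomputable def Rfun (γ : ℝ) (m : ℕ) (t : ℝ) : ℝ :=
  ∫ s in Set.Ioi t, s ^ (-2 : ℝ) * Pfun γ m s

theorem Monovary.integral_mul_integral_le_integral_mul_integral {α : Type*} [MeasurableSpace α]
    {μ : Measure α} [SFinite μ] {w f g : α → ℝ} (hfg : Monovary f g) (hw : 0 ≤ᵐ[μ] w)
    (hw_int : Integrable w μ) (hwf : Integrable (fun x => w x * f x) μ)
    (hwg : Integrable (fun x => w x * g x) μ) (hwfg : Integrable (fun x => w x * (f x * g x)) μ) :
    (∫ x, w x * f x ∂μ) * (∫ x, w x * g x ∂μ)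
      ≤ (∫ x, w x ∂μ) * ∫ x, w x * (f x * g x) ∂μ := by
  have hw₂ : ∀ᵐ p ∂μ.prod μ, 0 ≤ w p.1 ∧ 0 ≤ w p.2 :=
    (Measure.quasiMeasurePreserving_fst.ae hw).and (Measure.quasiMeasurePreserving_snd.ae hw)
  have rearrangement : ∀ᵐ p ∂μ.prod μ,
      w p.1 * f p.1 * (w p.2 * g p.2) + w p.1 * g p.1 * (w p.2 * f p.2)
        ≤ w p.1 * (w p.2 * (f p.2 * g p.2)) + w p.1 * (f p.1 * g p.1) * w p.2 := by
    filter_upwards [hw₂] with p ⟨h₁, h₂⟩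
    have := mul_le_mul_of_nonneg_left (hfg.mul_add_mul_le_mul_add_mul p.1 p.2)
      (mul_nonneg h₁ h₂)
    linarith
  have := integral_mono_ae ((hwf.mul_prod hwg).add (hwg.mul_prod hwf))
    ((hw_int.mul_prod hwfg).add (hwfg.mul_prod hw_int)) rearrangement
  rw [integral_add' (hwf.mul_prod hwg) (hwg.mul_prod hwf),
    integral_add' (hw_int.mul_prod hwfg) (hwfg.mul_prod hw_int),
    integral_prod_mul (fun x => w x * f x) (fun y => w y * g y),
    integral_prod_mul (fun x => w x * g x) (fun y => w y * f y),
    integral_prod_mul w (fun y => w y * (f y * g y)),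
    integral_prod_mul (fun x => w x * (f x * g x)) w] at this
  linarith

lemma integrableOn_rpow_neg_mul_inv_max {γ : ℝ} (hγ : 0 < γ) (t : ℝ) :
    IntegrableOn (fun s : ℝ => s ^ (-γ) * (max t s)⁻¹) (Set.Ioi 1) := by
  refine (integrableOn_Ioi_rpow_of_lt (by linarith : -γ - 1 < -1) one_pos).mono'
    (by fun_prop) ?_
  filter_upwards [ae_restrict_mem measurableSet_Ioi] with s (hs : 1 < s)
  have hs₀ : 0 < s := one_pos.trans hs
  rw [norm_mul, norm_of_nonneg (rpow_nonneg hs₀.le _),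
    norm_of_nonneg (inv_nonneg.2 (hs₀.le.trans (le_max_right t s))),
    rpow_sub hs₀, rpow_one, div_eq_mul_inv]
  exact mul_le_mul_of_nonneg_left (inv_anti₀ hs₀ (le_max_right t s)) (rpow_nonneg hs₀.le _)

lemma hfun_nonneg (γ t : ℝ) : 0 ≤ hfun γ t :=
  setIntegral_nonneg measurableSet_Ioi fun s (hs : 1 < s) =>
    mul_nonneg (rpow_nonneg (by linarith) _) (inv_nonneg.2 (by linarith [le_max_right t s]))

lemma hfun_antitone {γ : ℝ} (hγ : 0 < γ) : Antitone (hfun γ) := fun t₁ t₂ h =>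
  setIntegral_mono_on (integrableOn_rpow_neg_mul_inv_max hγ t₂)
    (integrableOn_rpow_neg_mul_inv_max hγ t₁) measurableSet_Ioi fun s (hs : 1 < s) =>
    mul_le_mul_of_nonneg_left
      (inv_anti₀ (by linarith [le_max_right t₁ s]) (max_le_max_right s h))
      (rpow_nonneg (by linarith) _)

lemma integrableOn_Icc_rpow_neg_mul_hfun_pow {γ : ℝ} (hγ : 0 < γ) (m : ℕ) (t : ℝ) :
    IntegrableOn (fun s : ℝ => s ^ (-γ) * hfun γ s ^ m) (Set.Icc 1 t) := by
  have : Measurable (hfun γ) := (hfun_antitone hγ).measurable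
  refine (integrableOn_const (C := hfun γ 1 ^ m) measure_Icc_lt_top.ne).mono' (by fun_prop) ?_
  filter_upwards [ae_restrict_mem measurableSet_Icc] with s ⟨hs, _⟩
  rw [norm_mul, norm_pow, norm_of_nonneg (rpow_nonneg (by linarith) _),
    norm_of_nonneg (hfun_nonneg γ s)]
  exact (mul_le_of_le_one_left (pow_nonneg (hfun_nonneg γ s) m)
    (rpow_le_one_of_one_le_of_nonpos hs (by linarith))).trans
    (pow_le_pow_left₀ (hfun_nonneg γ s) (hfun_antitone hγ hs) m)

lemma h0_eq_Nfun_zero (γ : ℝ) : h0 γ = Nfun γ 0 := by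
  ext t
  simp [h0, Nfun]

lemma continuousOn_Nfun {γ : ℝ} (hγ : 0 < γ) (m : ℕ) {b : ℝ} (hb : 1 ≤ b) :
    ContinuousOn (Nfun γ m) (Set.Icc 1 b) := by
  have := intervalIntegral.continuousOn_primitive_interval (a := 1) (b := b)
    (by rw [Set.uIcc_of_le hb]; exact integrableOn_Icc_rpow_neg_mul_hfun_pow hγ m b)
  rwa [Set.uIcc_of_le hb] at this

lemma Nfun_mul_Nfun_le {γ : ℝ} (hγ : 0 < γ) (i j : ℕ) {t : ℝ} (ht : 1 ≤ t) :
    Nfun γ i t * Nfun γ j t ≤ h0 γ t * Nfun γ (i + j) t := by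
  have hint (m : ℕ) : IntegrableOn (fun s : ℝ => s ^ (-γ) * hfun γ s ^ m) (Set.Ioc 1 t) :=
    (integrableOn_Icc_rpow_neg_mul_hfun_pow hγ m t).mono_set Set.Ioc_subset_Icc_self
  have hmono : Monovary (fun s => hfun γ s ^ i) (fun s => hfun γ s ^ j) :=
    ((monovary_self _).pow_left₀ (hfun_nonneg γ) i).pow_right₀ (hfun_nonneg γ) j
  have := hmono.integral_mul_integral_le_integral_mul_integral
    (μ := volume.restrict (Set.Ioc 1 t)) (w := fun s => s ^ (-γ))
    (ae_restrict_of_forall_mem measurableSet_Ioc fun s hs => rpow_nonneg (by linarith [hs.1]) _)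
    (by simpa using (hint 0).integrable) (hint i) (hint j)
    (by simpa [pow_add] using (hint (i + j)).integrable)
  simpa [h0, Nfun, intervalIntegral.integral_of_le ht, pow_add] using this

theorem stmt_11_general (γ a b : ℝ) (hγ : 0 < γ) (ha : 1 ≤ a) (hab : a ≤ b)
    (i j : ℕ) :
    (∫ t in a..b, t ^ (-2 : ℝ) * Nfun γ i t * Nfun γ j t)
      ≤ ∫ t in a..b, t ^ (-2 : ℝ) * h0 γ t * Nfun γ (i + j) t := by
  have hsub : Set.uIcc a b ⊆ Set.Icc 1 b := by
    rw [Set.uIcc_of_le hab]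
    exact Set.Icc_subset_Icc_left ha
  have hN (m : ℕ) : ContinuousOn (Nfun γ m) (Set.uIcc a b) :=
    (continuousOn_Nfun hγ m (ha.trans hab)).mono hsub
  have hh0 : ContinuousOn (h0 γ) (Set.uIcc a b) := h0_eq_Nfun_zero γ ▸ hN 0
  have hpow : ContinuousOn (fun t : ℝ => t ^ (-2 : ℝ)) (Set.uIcc a b) :=
    continuousOn_id.rpow_const fun t ht => Or.inl (zero_lt_one.trans_le (hsub ht).1).ne'
  refine intervalIntegral.integral_mono_on hab ((hpow.mul (hN i)).mul (hN j)).intervalIntegrable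
    ((hpow.mul hh0).mul (hN (i + j))).intervalIntegrable fun t ht => ?_
  simp only [mul_assoc]
  exact mul_le_mul_of_nonneg_left (Nfun_mul_Nfun_le hγ i j (ha.trans ht.1))
    (rpow_nonneg (by linarith [ht.1]) _)

theorem stmt_11 (γ a b : ℝ) (hγ : 0 < γ) (hγ1 : γ ≤ 1) (ha : 1 ≤ a) (hab : a ≤ b)
    (i j : ℕ) :
    (∫ t in a..b, t ^ (-2 : ℝ) * Nfun γ i t * Nfun γ j t)
      ≤ ∫ t in a..b, t ^ (-2 : ℝ) * h0 γ t * Nfun γ (i + j) t :=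
  stmt_11_general γ a b hγ ha hab i j
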